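/- Let V = U_1 ⊕ ... ⊕ U_m with the (m,n,π)-ordered Hamming block metric. Every symmetry T of V with T(0) = 0 factors as T = T_σ ∘ g, where σ is an admissible permutation of {1,...,m} acting by permuting chains with matching block dimensions, and g = (g_1,...,g_m) with each g_i a symmetry of (U_i, d_i). -/
import Mathlib


/-- The chain poset block metric: `d(u,v) = max{ i : u_i ≠ v_i }` (1-indexed), `0` if `u = v`. -/
def chainDist {F : Type*} [DecidableEq F] {n : ℕ} {k : Fin n → ℕ}
    (u v : ∀ i : Fin n, Fin (k i) → F) : ℕ :=
  (Finset.univ.filter fun i => u i ≠ v i).sup fun i => (i : ℕ) + 1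

/-- The `(m,n,π)`-ordered Hamming block metric: `d(u,v) = Σ_i d_i(u_i,v_i)`. -/
def ohDist {F : Type*} [DecidableEq F] {m n : ℕ} {k : Fin m → Fin n → ℕ}
    (u v : ∀ i : Fin m, ∀ l : Fin n, Fin (k i l) → F) : ℕ :=
  ∑ i : Fin m, chainDist (u i) (v i)

namespace Stmt11Aux
set_option linter.unusedSectionVars false
variable {F : Type*} [DecidableEq F] [Zero F] {n : ℕ}

theorem chainDist_self {κ : Fin n → ℕ} (u : ∀ l, Fin (κ l) → F) : chainDist u u = 0 := by
  unfold chainDist; simp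

theorem chainDist_comm {κ : Fin n → ℕ} (u v : ∀ l, Fin (κ l) → F) :
    chainDist u v = chainDist v u := by
  unfold chainDist
  congr 1
  ext i
  simp [ne_comm]

theorem le_chainDist {κ : Fin n → ℕ} {u v : ∀ l, Fin (κ l) → F} {i : Fin n} (h : u i ≠ v i) :
    (i : ℕ) + 1 ≤ chainDist u v := by
  unfold chainDist
  apply Finset.le_sup (b := i)
  exact Finset.mem_filter.mpr ⟨Finset.mem_univ i, h⟩

theorem chainDist_eq_zero_iff {κ : Fin n → ℕ} {u v : ∀ l, Fin (κ l) → F} :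
    chainDist u v = 0 ↔ u = v := by
  constructor
  · intro h
    funext i
    by_contra hne
    have := le_chainDist hne
    omega
  · rintro rfl; exact chainDist_self u

theorem chainDist_ultra {κ : Fin n → ℕ} (u v w : ∀ l, Fin (κ l) → F) :
    chainDist u w ≤ max (chainDist u v) (chainDist v w) := by
  refine Finset.sup_le ?_
  intro i hi
  simp only [Finset.mem_filter] at hi
  by_cases h : u i = v i
  · exact le_max_of_le_right (le_chainDist (h ▸ hi.2))
  · exact le_max_of_le_left (le_chainDist h)

theorem chainDist_interval {κ : Fin n → ℕ} {u v : ∀ l, Fin (κ l) → F}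
    (h : chainDist 0 u + chainDist u v = chainDist 0 v) : u = 0 ∨ u = v := by
  have h1 := chainDist_ultra (0 : ∀ l, Fin (κ l) → F) u v
  have h1' : chainDist 0 v ≤ chainDist 0 u ∨ chainDist 0 v ≤ chainDist u v := le_max_iff.mp h1
  rcases Nat.eq_zero_or_pos (chainDist 0 u) with h2 | h2
  · left
    exact (chainDist_eq_zero_iff.mp ((chainDist_comm u 0) ▸ h2)).symm
  · right
    have : chainDist u v = 0 := by omega
    exact chainDist_eq_zero_iff.mp this

theorem chainDist_le_iff {κ : Fin n → ℕ} {u : ∀ l, Fin (κ l) → F} {t : ℕ} :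
    chainDist u 0 ≤ t ↔ ∀ l : Fin n, t ≤ (l : ℕ) → u l = 0 := by
  unfold chainDist
  rw [Finset.sup_le_iff]
  constructor
  · intro h l hl
    by_contra hne
    have := h l (by simp [hne])
    omega
  · intro h l hl
    simp only [Finset.mem_filter] at hl
    by_contra hc
    exact hl.2 (h l (by omega))

section Blocks
variable {m : ℕ} {k : Fin m → Fin n → ℕ}

/-- Embed a single block as a vector supported on block `i`. -/
def extB (i : Fin m) (x : ∀ l, Fin (k i l) → F) : ∀ j, ∀ l, Fin (k j l) → F :=
  Function.update 0 i x

@[simp] theorem extB_same (i : Fin m) (x : ∀ l, Fin (k i l) → F) : extB i x i = x := by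
  unfold extB
  simp

theorem extB_ne {i j : Fin m} (h : j ≠ i) (x : ∀ l, Fin (k i l) → F) :
    extB i x j = 0 := by
  unfold extB
  rw [Function.update_of_ne h]
  rfl

theorem extB_zero (i : Fin m) : extB (k := k) (F := F) i 0 = 0 := by
  funext j
  by_cases h : j = i
  · subst h; simp [extB]
  · rw [extB_ne h]; rfl

theorem pure_eq_extB {v : ∀ j, ∀ l, Fin (k j l) → F} {i : Fin m}
    (h : ∀ j, j ≠ i → v j = 0) : v = extB i (v i) := by
  funext j
  by_cases hj : j = i
  · subst hj; rw [extB_same]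
  · rw [extB_ne hj, h j hj]

theorem ohDist_self (v : ∀ j, ∀ l, Fin (k j l) → F) : ohDist v v = 0 := by
  unfold ohDist
  simp [chainDist_self]

theorem ohDist_comm (u v : ∀ j, ∀ l, Fin (k j l) → F) : ohDist u v = ohDist v u := by
  unfold ohDist
  exact Finset.sum_congr rfl fun j _ => chainDist_comm _ _

theorem ohDist_eq_zero_iff {u v : ∀ j, ∀ l, Fin (k j l) → F} : ohDist u v = 0 ↔ u = v := by
  unfold ohDist
  rw [Finset.sum_eq_zero_iff]
  constructor
  · intro h; funext j; exact chainDist_eq_zero_iff.mp (h j (Finset.mem_univ j))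
  · rintro rfl; exact fun j _ => chainDist_self _

theorem ohDist_single {v w : ∀ j, ∀ l, Fin (k j l) → F} (i : Fin m)
    (h : ∀ j, j ≠ i → v j = w j) : ohDist v w = chainDist (v i) (w i) := by
  unfold ohDist
  exact Finset.sum_eq_single i (fun j _ hj => by rw [h j hj, chainDist_self])
    (fun h' => absurd (Finset.mem_univ i) h')

theorem ohDist_pair {v w : ∀ j, ∀ l, Fin (k j l) → F} {i i' : Fin m} (hne : i ≠ i')
    (h : ∀ j, j ≠ i → j ≠ i' → v j = w j) :
    ohDist v w = chainDist (v i) (w i) + chainDist (v i') (w i') := by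
  unfold ohDist
  rw [show chainDist (v i) (w i) + chainDist (v i') (w i') =
      ∑ j ∈ ({i, i'} : Finset (Fin m)), chainDist (v j) (w j) from (Finset.sum_pair (f := fun j => chainDist (v j) (w j)) hne).symm]
  refine (Finset.sum_subset (Finset.subset_univ _) ?_).symm
  intro j _ hj
  simp only [Finset.mem_insert, Finset.mem_singleton] at hj
  push_neg at hj
  rw [h j hj.1 hj.2, chainDist_self]

theorem wt_extB (i : Fin m) (x : ∀ l, Fin (k i l) → F) :
    ohDist (extB i x) 0 = chainDist x 0 := by
  rw [ohDist_single i (fun j hj => by rw [extB_ne hj]; rfl), extB_same]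
  rfl

theorem interval_iff {u v : ∀ j, ∀ l, Fin (k j l) → F} :
    ohDist 0 u + ohDist u v = ohDist 0 v ↔ ∀ j, u j = 0 ∨ u j = v j := by
  constructor
  · intro h
    have hle : ∀ j ∈ (Finset.univ : Finset (Fin m)),
        chainDist (0 : ∀ l, Fin (k j l) → F) (v j) ≤
          chainDist 0 (u j) + chainDist (u j) (v j) := by
      intro j _
      refine le_trans (chainDist_ultra 0 (u j) (v j)) ?_
      exact max_le (Nat.le_add_right _ _) (Nat.le_add_left _ _)
    have hsum : ∑ j : Fin m, chainDist (0 : ∀ l, Fin (k j l) → F) (v j) =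
        ∑ j : Fin m, (chainDist 0 (u j) + chainDist (u j) (v j)) := by
      rw [Finset.sum_add_distrib]
      exact h.symm
    have := (Finset.sum_eq_sum_iff_of_le hle).mp hsum
    intro j
    exact chainDist_interval (this j (Finset.mem_univ j)).symm
  · intro h
    unfold ohDist
    rw [← Finset.sum_add_distrib]
    refine Finset.sum_congr rfl ?_
    intro j _
    have hz : (0 : ∀ j', ∀ l, Fin (k j' l) → F) j = 0 := rfl
    rw [hz]
    rcases h j with h' | h'
    · rw [h', chainDist_self]
      simp
    · rw [h', chainDist_self]
      simp

end Blocks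

section Pure
variable [Fintype F] {m : ℕ} {k : Fin m → Fin n → ℕ}

/-- The metric interval between `0` and `v`, as a finset. -/
noncomputable def Ivl (v : ∀ j, ∀ l, Fin (k j l) → F) :
    Finset (∀ j, ∀ l, Fin (k j l) → F) := by
  classical
  exact Finset.univ.filter (fun u => ohDist 0 u + ohDist u v = ohDist 0 v)

theorem mem_Ivl {u v : ∀ j, ∀ l, Fin (k j l) → F} :
    u ∈ Ivl v ↔ ∀ j, u j = 0 ∨ u j = v j := by
  classical
  rw [Ivl]
  simp only [Finset.mem_filter, Finset.mem_univ, true_and]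
  exact interval_iff

theorem mem_Ivl' {u v : ∀ j, ∀ l, Fin (k j l) → F} :
    u ∈ Ivl v ↔ ohDist 0 u + ohDist u v = ohDist 0 v := by
  classical
  rw [Ivl]
  simp only [Finset.mem_filter, Finset.mem_univ, true_and]

/-- `v` is supported on a single block. -/
def IsPure (v : ∀ j, ∀ l, Fin (k j l) → F) : Prop :=
  ∃ i, ∀ j, j ≠ i → v j = 0

theorem exists_pure_index {v : ∀ j, ∀ l, Fin (k j l) → F} (hv : v ≠ 0) (hp : IsPure v) :
    ∃ i, v i ≠ 0 ∧ ∀ j, j ≠ i → v j = 0 := by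
  obtain ⟨i, hi⟩ := hp
  refine ⟨i, ?_, hi⟩
  intro h
  apply hv
  funext j
  by_cases hj : j = i
  · subst hj; rw [h]; rfl
  · rw [hi j hj]; rfl

theorem pure_index_unique {v : ∀ j, ∀ l, Fin (k j l) → F} {i i' : Fin m}
    (hi : v i ≠ 0) (h : ∀ j, j ≠ i' → v j = 0) : i = i' := by
  by_contra hne
  exact hi (h i hne)

theorem Ivl_pure_eq {v : ∀ j, ∀ l, Fin (k j l) → F} {i : Fin m}
    (h : ∀ j, j ≠ i → v j = 0) : Ivl v = {0, v} := by
  classical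
  ext u
  rw [mem_Ivl]
  simp only [Finset.mem_insert, Finset.mem_singleton]
  constructor
  · intro hu
    by_cases hui : u i = 0
    · left
      funext j
      by_cases hj : j = i
      · subst hj; rw [hui]; rfl
      · rcases hu j with h' | h'
        · rw [h']; rfl
        · rw [h', h j hj]; rfl
    · right
      rcases hu i with h' | h'
      · exact absurd h' hui
      · funext j
        by_cases hj : j = i
        · subst hj; exact h'
        · rcases hu j with h'' | h''
          · rw [h'', h j hj]
          · exact h''
  · rintro (rfl | rfl)
    · intro j; left; rfl
    · intro j; right; rfl

theorem card_Ivl_ge_three {v : ∀ j, ∀ l, Fin (k j l) → F} (hv : v ≠ 0) (hp : ¬ IsPure v) :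
    3 ≤ (Ivl v).card := by
  classical
  have h1 : ∃ i, v i ≠ 0 := by
    by_contra h
    push_neg at h
    exact hv (funext fun j => h j)
  obtain ⟨i1, hi1⟩ := h1
  have h2 : ∃ i2, i2 ≠ i1 ∧ v i2 ≠ 0 := by
    by_contra h
    push_neg at h
    exact hp ⟨i1, fun j hj => h j hj⟩
  obtain ⟨i2, hi2ne, hi2⟩ := h2
  have hsub : ({0, extB i1 (v i1), v} : Finset (∀ j, ∀ l, Fin (k j l) → F)) ⊆ Ivl v := by
    intro u hu
    simp only [Finset.mem_insert, Finset.mem_singleton] at hu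
    rcases hu with rfl | rfl | rfl
    · rw [mem_Ivl]; intro j; left; rfl
    · rw [mem_Ivl]; intro j
      by_cases hj : j = i1
      · subst hj; right; rw [extB_same]
      · left; exact extB_ne hj _
    · rw [mem_Ivl]; intro j; right; rfl
  refine le_trans ?_ (Finset.card_le_card hsub)
  have hne1 : (0 : ∀ j, ∀ l, Fin (k j l) → F) ≠ extB i1 (v i1) := by
    intro h
    apply hi1
    have := congrFun h.symm i1
    rw [extB_same] at this
    exact this
  have hne2 : (0 : ∀ j, ∀ l, Fin (k j l) → F) ≠ v := fun h => hv h.symm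
  have hne3 : extB i1 (v i1) ≠ v := by
    intro h
    apply hi2
    have := congrFun h.symm i2
    rw [extB_ne hi2ne] at this
    exact this
  rw [Finset.card_insert_of_notMem (by simp [hne1, hne2]),
      Finset.card_insert_of_notMem (by simp [hne3]), Finset.card_singleton]

theorem card_Ivl_pure {v : ∀ j, ∀ l, Fin (k j l) → F} (hv : v ≠ 0) (hp : IsPure v) :
    (Ivl v).card = 2 := by
  classical
  obtain ⟨i, hi⟩ := hp
  rw [Ivl_pure_eq hi]
  exact Finset.card_pair (fun h => hv h.symm)

theorem image_Ivl
    (T : (∀ j, ∀ l, Fin (k j l) → F) → (∀ j, ∀ l, Fin (k j l) → F))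
    (hTbij : Function.Bijective T)
    (hTiso : ∀ u v, ohDist (T u) (T v) = ohDist u v)
    (hT0 : T 0 = 0) (v : ∀ j, ∀ l, Fin (k j l) → F) :
    (Ivl v).image T = Ivl (T v) := by
  classical
  have hz : ∀ u, ohDist 0 (T u) = ohDist 0 u := by
    intro u
    rw [← hTiso 0 u, hT0]
  ext u
  rw [Finset.mem_image]
  constructor
  · rintro ⟨w, hw, rfl⟩
    rw [mem_Ivl'] at hw ⊢
    rw [hz, hTiso, hz]
    exact hw
  · intro hu
    obtain ⟨w, rfl⟩ := hTbij.2 u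
    refine ⟨w, ?_, rfl⟩
    rw [mem_Ivl'] at hu ⊢
    rw [hz, hTiso, hz] at hu
    exact hu

theorem pure_map
    (T : (∀ j, ∀ l, Fin (k j l) → F) → (∀ j, ∀ l, Fin (k j l) → F))
    (hTbij : Function.Bijective T)
    (hTiso : ∀ u v, ohDist (T u) (T v) = ohDist u v)
    (hT0 : T 0 = 0) {v : ∀ j, ∀ l, Fin (k j l) → F} (hv : v ≠ 0) (hp : IsPure v) :
    T v ≠ 0 ∧ IsPure (T v) := by
  classical
  have hTv : T v ≠ 0 := by
    intro h
    exact hv (hTbij.1 (h.trans hT0.symm))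
  refine ⟨hTv, ?_⟩
  by_contra hnp
  have h3 := card_Ivl_ge_three hTv hnp
  rw [← image_Ivl T hTbij hTiso hT0 v, Finset.card_image_of_injective _ hTbij.1,
      card_Ivl_pure hv hp] at h3
  omega

theorem same_block_iff {v w : ∀ j, ∀ l, Fin (k j l) → F} {i i' : Fin m}
    (hv : v i ≠ 0) (hpv : ∀ j, j ≠ i → v j = 0)
    (hw : w i' ≠ 0) (hpw : ∀ j, j ≠ i' → w j = 0) :
    i = i' ↔ ohDist v w < ohDist v 0 + ohDist w 0 := by
  constructor
  · rintro rfl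
    rw [ohDist_single i (fun j hj => by rw [hpv j hj, hpw j hj]),
        ohDist_single (w := (0 : ∀ j, ∀ l, Fin (k j l) → F)) i hpv,
        ohDist_single (w := (0 : ∀ j, ∀ l, Fin (k j l) → F)) i hpw]
    have h1 := chainDist_ultra (v i) (0 : ∀ l, Fin (k i l) → F) (w i)
    have h2 : 0 < chainDist (v i) (0 : ∀ l, Fin (k i l) → F) :=
      Nat.pos_of_ne_zero (fun h => hv (chainDist_eq_zero_iff.mp h))
    have h3 : 0 < chainDist (w i) (0 : ∀ l, Fin (k i l) → F) :=
      Nat.pos_of_ne_zero (fun h => hw (chainDist_eq_zero_iff.mp h))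
    have h4 : chainDist (0 : ∀ l, Fin (k i l) → F) (w i) =
        chainDist (w i) (0 : ∀ l, Fin (k i l) → F) := chainDist_comm _ _
    have h5 := le_max_iff.mp h1
    have hc1 : chainDist (v i) (w i) ≤ chainDist (v i) (0 : ∀ l, Fin (k i l) → F) ∨
        chainDist (v i) (w i) ≤ chainDist (w i) (0 : ∀ l, Fin (k i l) → F) := by
      rcases h5 with h | h
      · exact Or.inl h
      · exact Or.inr (h4 ▸ h)
    have : chainDist (v i) ((0 : ∀ j, ∀ l, Fin (k j l) → F) i) =
        chainDist (v i) (0 : ∀ l, Fin (k i l) → F) := rfl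
    rw [this]
    have : chainDist (w i) ((0 : ∀ j, ∀ l, Fin (k j l) → F) i) =
        chainDist (w i) (0 : ∀ l, Fin (k i l) → F) := rfl
    rw [this]
    omega
  · intro h
    by_contra hne
    rw [ohDist_pair hne (fun j h1 h2 => by rw [hpv j h1, hpw j h2]),
        ohDist_single (w := (0 : ∀ j, ∀ l, Fin (k j l) → F)) i hpv,
        ohDist_single (w := (0 : ∀ j, ∀ l, Fin (k j l) → F)) i' hpw,
        hpw i hne, hpv i' (Ne.symm hne)] at h
    have h4 : chainDist (0 : ∀ l, Fin (k i' l) → F) (w i') =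
        chainDist (w i') (0 : ∀ l, Fin (k i' l) → F) := chainDist_comm _ _
    have e1 : chainDist (v i) ((0 : ∀ j, ∀ l, Fin (k j l) → F) i) =
        chainDist (v i) (0 : ∀ l, Fin (k i l) → F) := rfl
    have e2 : chainDist (w i') ((0 : ∀ j, ∀ l, Fin (k j l) → F) i') =
        chainDist (w i') (0 : ∀ l, Fin (k i' l) → F) := rfl
    rw [e1, e2, h4] at h
    omega

end Pure

section Count
variable [Fintype F] {m : ℕ} {k : Fin m → Fin n → ℕ}

theorem same_block_map
    (T : (∀ j, ∀ l, Fin (k j l) → F) → (∀ j, ∀ l, Fin (k j l) → F))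
    (hTiso : ∀ u v, ohDist (T u) (T v) = ohDist u v)
    (hT0 : T 0 = 0)
    {v w : ∀ j, ∀ l, Fin (k j l) → F} {i j j' : Fin m}
    (hv : v i ≠ 0) (hpv : ∀ j0, j0 ≠ i → v j0 = 0)
    (hw : w i ≠ 0) (hpw : ∀ j0, j0 ≠ i → w j0 = 0)
    (hv' : T v j ≠ 0) (hpv' : ∀ j0, j0 ≠ j → T v j0 = 0)
    (hw' : T w j' ≠ 0) (hpw' : ∀ j0, j0 ≠ j' → T w j0 = 0) :
    j = j' := by
  have hwt : ∀ u, ohDist (T u) 0 = ohDist u 0 := by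
    intro u
    rw [← hTiso u 0, hT0]
  have hlt : ohDist v w < ohDist v 0 + ohDist w 0 :=
    (same_block_iff hv hpv hw hpw).mp rfl
  refine (same_block_iff hv' hpv' hw' hpw').mpr ?_
  rw [hTiso, hwt, hwt]
  exact hlt

/-- Number of chain vectors of weight at most `t`. -/
theorem card_ball (κ : Fin n → ℕ) (t : ℕ) :
    Fintype.card {x : ∀ l : Fin n, Fin (κ l) → F // chainDist x 0 ≤ t} =
      Fintype.card F ^ (∑ l ∈ Finset.univ.filter (fun l : Fin n => (l : ℕ) < t), κ l) := by
  classical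
  have e : {x : ∀ l : Fin n, Fin (κ l) → F // chainDist x 0 ≤ t} ≃
      (∀ l : {l : Fin n // (l : ℕ) < t}, Fin (κ l) → F) := by
    refine ⟨fun x l => x.1 l, fun y => ⟨fun l => if h : (l : ℕ) < t then y ⟨l, h⟩ else 0, ?_⟩,
      ?_, ?_⟩
    · rw [chainDist_le_iff]
      intro l hl
      rw [dif_neg (by omega)]
    · intro x
      refine Subtype.ext (funext fun l => ?_)
      by_cases h : (l : ℕ) < t
      · dsimp only
        rw [dif_pos h]
      · dsimp only
        rw [dif_neg h]
        exact ((chainDist_le_iff.mp x.2) l (by omega)).symm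
    · intro y
      funext l
      dsimp only
      rw [dif_pos l.2]
  rw [Fintype.card_congr e, Fintype.card_pi]
  have h1 : ∀ l : {l : Fin n // (l : ℕ) < t},
      Fintype.card (Fin (κ l) → F) = Fintype.card F ^ (κ l) := by
    intro l
    rw [Fintype.card_fun, Fintype.card_fin]
  rw [Finset.prod_congr rfl (fun l _ => h1 l), Finset.prod_pow_eq_pow_sum]
  congr 1
  exact (Finset.sum_subtype _ (by simp) κ).symm

theorem sum_filter_succ (κ : Fin n → ℕ) (l : Fin n) :
    ∑ l' ∈ Finset.univ.filter (fun l' : Fin n => (l' : ℕ) < (l : ℕ) + 1), κ l' =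
      (∑ l' ∈ Finset.univ.filter (fun l' : Fin n => (l' : ℕ) < (l : ℕ)), κ l') + κ l := by
  classical
  have h : Finset.univ.filter (fun l' : Fin n => (l' : ℕ) < (l : ℕ) + 1) =
      insert l (Finset.univ.filter (fun l' : Fin n => (l' : ℕ) < (l : ℕ))) := by
    ext l'
    simp only [Finset.mem_filter, Finset.mem_univ, true_and, Finset.mem_insert, Fin.ext_iff]
    omega
  rw [h, Finset.sum_insert (by simp)]
  omega

theorem card_mono_aux
    (T : (∀ j, ∀ l, Fin (k j l) → F) → (∀ j, ∀ l, Fin (k j l) → F))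
    (hTinj : Function.Injective T)
    (hTiso : ∀ u v, ohDist (T u) (T v) = ohDist u v)
    (hT0 : T 0 = 0) (i j : Fin m)
    (hpure : ∀ x : ∀ l, Fin (k i l) → F, x ≠ 0 → ∀ j', j' ≠ j → T (extB i x) j' = 0)
    (t : ℕ) :
    Fintype.card {x : ∀ l, Fin (k i l) → F // chainDist x 0 ≤ t} ≤
      Fintype.card {y : ∀ l, Fin (k j l) → F // chainDist y 0 ≤ t} := by
  classical
  have hwt : ∀ u, ohDist (T u) 0 = ohDist u 0 := by
    intro u
    rw [← hTiso u 0, hT0]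
  have E1 : ∀ x : ∀ l, Fin (k i l) → F, T (extB i x) = extB j (T (extB i x) j) := by
    intro x
    by_cases hx : x = 0
    · subst hx
      rw [extB_zero, hT0]
      rw [show (0 : ∀ j0, ∀ l, Fin (k j0 l) → F) j = 0 from rfl, extB_zero]
    · exact pure_eq_extB (hpure x hx)
  have hwt1 : ∀ x : ∀ l, Fin (k i l) → F,
      chainDist (T (extB i x) j) 0 = chainDist x 0 := by
    intro x
    have h1 : ohDist (T (extB i x)) 0 = ohDist (extB i x) 0 := hwt _
    rw [wt_extB] at h1
    rw [← h1]
    conv_rhs => rw [E1 x]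
    rw [wt_extB]
  refine Fintype.card_le_of_injective
    (fun x => ⟨T (extB i x) j, by rw [hwt1]; exact x.2⟩) ?_
  intro x y hxy
  have h2 : T (extB i x.1) j = T (extB i y.1) j := congrArg Subtype.val hxy
  have h3 : T (extB i x.1) = T (extB i y.1) := by
    rw [E1 x.1, E1 y.1, h2]
  have h4 := hTinj h3
  have h5 := congrFun h4 i
  rw [extB_same, extB_same] at h5
  exact Subtype.ext h5

end Count

end Stmt11Aux

open Stmt11Aux

/-- Every symmetry `T` of the ordered Hamming block space fixing the origin factors as
`T = T_σ ∘ g`, where `σ` is an admissible permutation of the chains and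
`g = (g_1,…,g_m)` with each `g_i` a symmetry of `(U_i, d_i)`. -/
theorem stmt11 {F : Type*} [Field F] [Fintype F] [DecidableEq F] {m n : ℕ}
    {k : Fin m → Fin n → ℕ}
    (T : (∀ i : Fin m, ∀ l : Fin n, Fin (k i l) → F) →
         (∀ i : Fin m, ∀ l : Fin n, Fin (k i l) → F))
    (hTbij : Function.Bijective T)
    (hTiso : ∀ u v, ohDist (T u) (T v) = ohDist u v)
    (hT0 : T 0 = 0) :
    ∃ σ : Equiv.Perm (Fin m), ∃ hσ : ∀ i l, k (σ i) l = k i l,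
    ∃ g : ∀ i : Fin m, (∀ l : Fin n, Fin (k i l) → F) → (∀ l : Fin n, Fin (k i l) → F),
      (∀ i, Function.Bijective (g i) ∧
        ∀ u v, chainDist (g i u) (g i v) = chainDist u v) ∧
      ∀ (v : ∀ i : Fin m, ∀ l : Fin n, Fin (k i l) → F) (i : Fin m) (l : Fin n)
        (x : Fin (k i l)),
        T v i l x = g (σ i) (v (σ i)) l (Fin.cast (hσ i l).symm x) := by
  classical
  -- the inverse symmetry
  obtain ⟨S, hST, hTS⟩ : ∃ S : (∀ i : Fin m, ∀ l : Fin n, Fin (k i l) → F) →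
      (∀ i : Fin m, ∀ l : Fin n, Fin (k i l) → F),
      (∀ v, S (T v) = v) ∧ (∀ v, T (S v) = v) := by
    obtain ⟨S, h1, h2⟩ := Function.bijective_iff_has_inverse.mp hTbij
    exact ⟨S, h1, h2⟩
  have hSbij : Function.Bijective S := Function.bijective_iff_has_inverse.mpr ⟨T, hTS, hST⟩
  have hS0 : S 0 = 0 := by
    rw [← hT0, hST]
    exact hT0.symm
  have hSiso : ∀ u v, ohDist (S u) (S v) = ohDist u v := by
    intro u v
    rw [← hTiso (S u) (S v), hTS, hTS]
  -- nontrivial blocks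
  set NT : Fin m → Prop := fun i => ∃ x : ∀ l, Fin (k i l) → F, x ≠ 0 with hNTdef
  have hkNT : ∀ i, ¬ NT i → ∀ l, k i l = 0 := by
    intro i h l
    by_contra hk
    apply h
    refine ⟨Function.update 0 l (fun _ => 1), ?_⟩
    intro h0
    have h1 := congrFun h0 l
    rw [Function.update_self] at h1
    have h2 := congrFun h1 ⟨0, Nat.pos_of_ne_zero hk⟩
    exact one_ne_zero h2
  -- extB of a nonzero element is pure nonzero
  have hextnz : ∀ (i : Fin m) (x : ∀ l, Fin (k i l) → F), x ≠ 0 → extB i x ≠ 0 := by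
    intro i x hx h
    apply hx
    have := congrFun h i
    rw [extB_same] at this
    exact this
  -- block map for T
  have hτex : ∀ i : Fin m, ∃ j, ∀ x : (∀ l, Fin (k i l) → F), x ≠ 0 →
      (T (extB i x) j ≠ 0 ∧ ∀ j', j' ≠ j → T (extB i x) j' = 0) := by
    intro i
    by_cases hi : NT i
    · obtain ⟨x0, hx0⟩ := hi
      have hp0 := pure_map T hTbij hTiso hT0 (hextnz i x0 hx0) ⟨i, fun j hj => extB_ne hj _⟩
      obtain ⟨j, hj1, hj2⟩ := exists_pure_index hp0.1 hp0.2
      refine ⟨j, ?_⟩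
      intro x hx
      have hp := pure_map T hTbij hTiso hT0 (hextnz i x hx) ⟨i, fun j' hj' => extB_ne hj' _⟩
      obtain ⟨j', hj1', hj2'⟩ := exists_pure_index hp.1 hp.2
      have : j = j' := same_block_map T hTiso hT0
        (v := extB i x0) (w := extB i x) (i := i)
        (by rw [extB_same]; exact hx0) (fun j0 hj0 => extB_ne hj0 _)
        (by rw [extB_same]; exact hx) (fun j0 hj0 => extB_ne hj0 _)
        hj1 hj2 hj1' hj2'
      rw [this]
      exact ⟨hj1', hj2'⟩
    · exact ⟨i, fun x hx => absurd ⟨x, hx⟩ hi⟩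
  choose τ hτ using hτex
  -- block map for S
  have hτ'ex : ∀ i : Fin m, ∃ j, ∀ x : (∀ l, Fin (k i l) → F), x ≠ 0 →
      (S (extB i x) j ≠ 0 ∧ ∀ j', j' ≠ j → S (extB i x) j' = 0) := by
    intro i
    by_cases hi : NT i
    · obtain ⟨x0, hx0⟩ := hi
      have hp0 := pure_map S hSbij hSiso hS0 (hextnz i x0 hx0) ⟨i, fun j hj => extB_ne hj _⟩
      obtain ⟨j, hj1, hj2⟩ := exists_pure_index hp0.1 hp0.2
      refine ⟨j, ?_⟩
      intro x hx
      have hp := pure_map S hSbij hSiso hS0 (hextnz i x hx) ⟨i, fun j' hj' => extB_ne hj' _⟩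
      obtain ⟨j', hj1', hj2'⟩ := exists_pure_index hp.1 hp.2
      have : j = j' := same_block_map S hSiso hS0
        (v := extB i x0) (w := extB i x) (i := i)
        (by rw [extB_same]; exact hx0) (fun j0 hj0 => extB_ne hj0 _)
        (by rw [extB_same]; exact hx) (fun j0 hj0 => extB_ne hj0 _)
        hj1 hj2 hj1' hj2'
      rw [this]
      exact ⟨hj1', hj2'⟩
    · exact ⟨i, fun x hx => absurd ⟨x, hx⟩ hi⟩
  choose τ' hτ' using hτ'ex
  -- τ' ∘ τ = id on nontrivial blocks
  have hNTτ : ∀ i, NT i → NT (τ i) := by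
    rintro i ⟨x, hx⟩
    exact ⟨T (extB i x) (τ i), (hτ i x hx).1⟩
  have hNTτ' : ∀ i, NT i → NT (τ' i) := by
    rintro i ⟨x, hx⟩
    exact ⟨S (extB i x) (τ' i), (hτ' i x hx).1⟩
  have hA4a : ∀ i, NT i → τ' (τ i) = i := by
    rintro i ⟨x, hx⟩
    have hz := hτ i x hx
    have hzz : T (extB i x) = extB (τ i) (T (extB i x) (τ i)) := pure_eq_extB hz.2
    have h1 := hτ' (τ i) (T (extB i x) (τ i)) hz.1
    rw [← hzz, hST] at h1
    exact (pure_index_unique (i := i) (by rw [extB_same]; exact hx) h1.2).symm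
  have hA4b : ∀ i, NT i → τ (τ' i) = i := by
    rintro i ⟨x, hx⟩
    have hz := hτ' i x hx
    have hzz : S (extB i x) = extB (τ' i) (S (extB i x) (τ' i)) := pure_eq_extB hz.2
    have h1 := hτ (τ' i) (S (extB i x) (τ' i)) hz.1
    rw [← hzz, hTS] at h1
    exact (pure_index_unique (i := i) (by rw [extB_same]; exact hx) h1.2).symm
  -- extend to a permutation of all blocks
  obtain ⟨τf, hτf1, hτf2⟩ : ∃ τf : Equiv.Perm (Fin m),
      (∀ i, NT i → τf i = τ i) ∧ (∀ i, ¬ NT i → τf i = i) := by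
    refine ⟨Equiv.Perm.extendDomain
      (⟨fun i => ⟨τ i.1, hNTτ _ i.2⟩, fun j => ⟨τ' j.1, hNTτ' _ j.2⟩,
        fun i => Subtype.ext (hA4a i.1 i.2), fun j => Subtype.ext (hA4b j.1 j.2)⟩ :
          Equiv.Perm {i : Fin m // NT i})
      (Equiv.refl _), fun i h => ?_, fun i h => Equiv.Perm.extendDomain_apply_not_subtype _ _ h⟩
    rw [Equiv.Perm.extendDomain_apply_subtype _ _ h]
    rfl
  -- block dimensions match
  have hkeq : ∀ i l, k (τf i) l = k i l := by
    intro i l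
    by_cases h : NT i
    · rw [hτf1 i h]
      have hc : ∀ t, Fintype.card {x : ∀ l, Fin (k i l) → F // chainDist x 0 ≤ t} =
          Fintype.card {y : ∀ l, Fin (k (τ i) l) → F // chainDist y 0 ≤ t} := by
        intro t
        refine le_antisymm
          (card_mono_aux T hTbij.1 hTiso hT0 i (τ i) (fun x hx => (hτ i x hx).2) t) ?_
        refine card_mono_aux S hSbij.1 hSiso hS0 (τ i) i ?_ t
        intro y hy j' hj'
        refine (hτ' (τ i) y hy).2 j' ?_
        rw [hA4a i h]
        exact hj'
      have hq : 1 < Fintype.card F := Fintype.one_lt_card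
      have hsum : ∀ t : ℕ,
          (∑ l' ∈ Finset.univ.filter (fun l' : Fin n => (l' : ℕ) < t), k i l') =
          (∑ l' ∈ Finset.univ.filter (fun l' : Fin n => (l' : ℕ) < t), k (τ i) l') := by
        intro t
        refine Nat.pow_right_injective hq ?_
        show Fintype.card F ^ _ = Fintype.card F ^ _
        rw [← card_ball, ← card_ball]
        exact hc t
      have h1 := hsum ((l : ℕ) + 1)
      have h2 := hsum (l : ℕ)
      rw [sum_filter_succ, sum_filter_succ] at h1
      omega
    · rw [hτf2 i h]
  -- main structural lemma
  have hP10 : ∀ v i, NT i → T v (τ i) = T (extB i (v i)) (τ i) := by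
    intro v i hi
    by_cases hvi : v i = 0
    · rw [hvi, extB_zero, hT0]
      show T v (τ i) = 0
      by_contra hc
      have hy : extB (τ i) (T v (τ i)) ∈ Ivl (T v) := by
        refine mem_Ivl.mpr (fun j => ?_)
        by_cases hj : j = τ i
        · subst hj; right; rw [extB_same]
        · left; exact extB_ne hj _
      have hzS : ∀ u, ohDist 0 (S u) = ohDist 0 u := fun u => by rw [← hSiso 0 u, hS0]
      have hyS : S (extB (τ i) (T v (τ i))) ∈ Ivl v := by
        rw [mem_Ivl'] at hy ⊢
        have e1 : ∀ y, ohDist (S y) v = ohDist y (T v) := by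
          intro y
          conv_lhs => rw [show v = S (T v) from (hST v).symm]
          exact hSiso y (T v)
        have e3 : ohDist 0 v = ohDist 0 (T v) := by
          conv_lhs => rw [show v = S (T v) from (hST v).symm]
          exact hzS (T v)
        rw [e1, hzS, e3]
        exact hy
      have h1 := hτ' (τ i) (T v (τ i)) hc
      rw [hA4a i hi] at h1
      rcases mem_Ivl.mp hyS i with h0 | h0
      · exact h1.1 h0
      · rw [hvi] at h0
        exact h1.1 h0
    · have hx := hτ i (v i) hvi
      have hm : extB i (v i) ∈ Ivl v := by
        refine mem_Ivl.mpr (fun j => ?_)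
        by_cases hj : j = i
        · subst hj; right; rw [extB_same]
        · left; exact extB_ne hj _
      have hm' : T (extB i (v i)) ∈ Ivl (T v) := by
        rw [← image_Ivl T hTbij hTiso hT0 v]
        exact Finset.mem_image_of_mem T hm
      rcases mem_Ivl.mp hm' (τ i) with h0 | h0
      · exact absurd h0 hx.1
      · exact h0.symm
  have hP10f : ∀ v i, NT i → T v (τf i) = T (extB i (v i)) (τf i) := by
    intro v i hi
    rw [hτf1 i hi]
    exact hP10 v i hi
  have hB1 : ∀ j, NT j → ∀ (x : ∀ l, Fin (k j l) → F) j', j' ≠ τf j → T (extB j x) j' = 0 := by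
    intro j hj x j' hj'
    rw [hτf1 j hj] at hj'
    by_cases hx : x = 0
    · subst hx
      rw [extB_zero, hT0]
      rfl
    · exact (hτ j x hx).2 j' hj'
  -- the blockwise symmetries
  let g : ∀ j : Fin m, (∀ l, Fin (k j l) → F) → (∀ l, Fin (k j l) → F) :=
    fun j x l y => T (extB j x) (τf j) l (Fin.cast (hkeq j l).symm y)
  have hgdef : ∀ j x l y, g j x l y = T (extB j x) (τf j) l (Fin.cast (hkeq j l).symm y) :=
    fun _ _ _ _ => rfl
  have hgiso : ∀ j u v, chainDist (g j u) (g j v) = chainDist u v := by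
    intro j u v
    by_cases hj : NT j
    · have hstep1 : chainDist (g j u) (g j v) =
          chainDist (T (extB j u) (τf j)) (T (extB j v) (τf j)) := by
        unfold chainDist
        congr 1
        ext l
        simp only [Finset.mem_filter, Finset.mem_univ, true_and]
        apply not_congr
        constructor
        · intro h
          funext y'
          have := congrFun h (Fin.cast (hkeq j l) y')
          rw [hgdef, hgdef] at this
          have e : Fin.cast (hkeq j l).symm (Fin.cast (hkeq j l) y') = y' := rfl
          rw [e] at this
          exact this
        · intro h
          funext y
          rw [hgdef, hgdef, h]
      have e1 : ohDist (T (extB j u)) (T (extB j v)) =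
          chainDist (T (extB j u) (τf j)) (T (extB j v) (τf j)) :=
        ohDist_single (τf j) (fun j' hj' => by rw [hB1 j hj u j' hj', hB1 j hj v j' hj'])
      have e2 : ohDist (extB j u) (extB j v) = chainDist u v := by
        rw [ohDist_single j (fun j' hj' => by rw [extB_ne hj', extB_ne hj']),
          extB_same, extB_same]
      rw [hstep1, ← e1, hTiso, e2]
    · have hu : u = v := by
        funext l y
        have h0 := hkNT j hj l
        exact absurd y.isLt (by omega)
      rw [hu, chainDist_self, chainDist_self]
  have hginj : ∀ j, Function.Injective (g j) := by
    intro j u v h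
    refine chainDist_eq_zero_iff.mp ?_
    rw [← hgiso j u v, h, chainDist_self]
  have hgbij : ∀ j, Function.Bijective (g j) :=
    fun j => Finite.injective_iff_bijective.mp (hginj j)
  -- assemble
  have hσk : ∀ i l, k (τf.symm i) l = k i l := by
    intro i l
    conv_rhs => rw [← τf.apply_symm_apply i]
    exact (hkeq (τf.symm i) l).symm
  refine ⟨τf.symm, hσk, g, fun j => ⟨hgbij j, hgiso j⟩, ?_⟩
  intro v i l x
  have L : ∀ (j : Fin m) (y : Fin (k j l)),
      T v (τf j) l (Fin.cast (hkeq j l).symm y) = g j (v j) l y := by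
    intro j y
    by_cases hj : NT j
    · have := congrFun (congrFun (hP10f v j hj) l) (Fin.cast (hkeq j l).symm y)
      rw [hgdef]
      exact this
    · have h0 := hkNT j hj l
      exact absurd y.isLt (by omega)
  have key := L (τf.symm i) (Fin.cast (hσk i l).symm x)
  rw [← key]
  have cast_lemma : ∀ (a b : Fin m) (hab : a = b) (xa : Fin (k a l)) (xb : Fin (k b l)),
      (xa : ℕ) = (xb : ℕ) → T v a l xa = T v b l xb := by
    rintro a b rfl xa xb hx
    have : xa = xb := Fin.val_injective hx
    rw [this]
  exact cast_lemma i (τf (τf.symm i)) (τf.apply_symm_apply i).symm x _ rfl
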